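/- arXiv:quant-ph/9803046 — 3 statements merged into one kernel-verified Lean document; each statement's English description precedes it below -/
import Mathlib

section
/- Let A and B be symmetric operators on E and Ψ a unit vector such that |⟪Ψ, (A∘B − B∘A) Ψ⟫| ≥ ħ. Then the product of rms values satisfies ‖A Ψ‖ · ‖B Ψ‖ ≥ ħ/2. -/
open scoped ComplexInnerProductSpace

/-- If the expectation of the commutator of two symmetric operators in a unit state `Ψ` has
modulus at least `hbar`, then the product of the rms values satisfies `‖A Ψ‖ ‖B Ψ‖ ≥ hbar/2`. -/
theorem rms_product_ge_of_commutator_expectation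
    {E : Type*} [NormedAddCommGroup E] [InnerProductSpace ℂ E]
    (hbar : ℝ) (hhbar : 0 < hbar)
    (A B : E →ₗ[ℂ] E) (hA : A.IsSymmetric) (hB : B.IsSymmetric)
    (Ψ : E) (hΨ : ‖Ψ‖ = 1)
    (h : hbar ≤ ‖⟪Ψ, (A ∘ₗ B - B ∘ₗ A) Ψ⟫‖) :
    hbar / 2 ≤ ‖A Ψ‖ * ‖B Ψ‖ := by
  have key : ⟪Ψ, (A ∘ₗ B - B ∘ₗ A) Ψ⟫
      = ⟪A Ψ, B Ψ⟫ - (starRingEnd ℂ) ⟪A Ψ, B Ψ⟫ := by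
    simp only [LinearMap.sub_apply, LinearMap.comp_apply, inner_sub_right]
    rw [← hA Ψ (B Ψ), ← hB Ψ (A Ψ)]; rw [inner_conj_symm]
  have hnorm : ‖⟪Ψ, (A ∘ₗ B - B ∘ₗ A) Ψ⟫‖ ≤ 2 * (‖A Ψ‖ * ‖B Ψ‖) := by
    rw [key]
    calc ‖⟪A Ψ, B Ψ⟫ - (starRingEnd ℂ) ⟪A Ψ, B Ψ⟫‖
        ≤ ‖⟪A Ψ, B Ψ⟫‖ + ‖(starRingEnd ℂ) ⟪A Ψ, B Ψ⟫‖ := norm_sub_le _ _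
      _ = 2 * ‖⟪A Ψ, B Ψ⟫‖ := by rw [RCLike.norm_conj]; ring
      _ ≤ 2 * (‖A Ψ‖ * ‖B Ψ‖) := by
          have := norm_inner_le_norm (𝕜 := ℂ) (A Ψ) (B Ψ)
          linarith
  linarith
end

section
/- Kennard's inequality: let A and B be symmetric operators on E satisfying the canonical commutation relation [A,B] = (i ħ) • id, and let Ψ be a unit vector. Then Δ_Ψ A · Δ_Ψ B ≥ ħ/2. -/
open scoped ComplexInnerProductSpace

/-- The standard deviation of the observable `A` in the state `Ψ`. -/
noncomputable def stddev {E : Type*} [NormedAddCommGroup E] [InnerProductSpace ℂ E]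
    (A : E →ₗ[ℂ] E) (Ψ : E) : ℝ :=
  Real.sqrt (‖A Ψ‖ ^ 2 - (Complex.re ⟪Ψ, A Ψ⟫) ^ 2)

lemma stddev_eq_norm_centered {E : Type*} [NormedAddCommGroup E] [InnerProductSpace ℂ E]
    (A : E →ₗ[ℂ] E) (hA : A.IsSymmetric) (Ψ : E) (hΨ : ‖Ψ‖ = 1) :
    stddev A Ψ = ‖A Ψ - ((Complex.re ⟪Ψ, A Ψ⟫ : ℂ)) • Ψ‖ := by
  set a : ℝ := Complex.re ⟪Ψ, A Ψ⟫ with ha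
  have hsym : ⟪A Ψ, Ψ⟫ = ⟪Ψ, A Ψ⟫ := hA Ψ Ψ
  have hre : Complex.re ⟪A Ψ, Ψ⟫ = a := by rw [hsym]
  have hnorm : ‖A Ψ - (a : ℂ) • Ψ‖ ^ 2 = ‖A Ψ‖ ^ 2 - a ^ 2 := by
    rw [@norm_sub_sq ℂ]
    have h1 : RCLike.re (K := ℂ) ⟪A Ψ, (a : ℂ) • Ψ⟫ = a * a := by
      rw [inner_smul_right]
      simp only [Complex.mul_re, Complex.ofReal_re, Complex.ofReal_im, RCLike.re_to_complex]
      rw [hre]; ring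
    have h2 : ‖(a : ℂ) • Ψ‖ = |a| := by
      rw [norm_smul, hΨ]; simp
    rw [h1, h2, sq_abs]
    ring
  rw [stddev, ← ha, ← hnorm, Real.sqrt_sq (norm_nonneg _)]

/-- Kennard's inequality: if symmetric operators `A`, `B` satisfy the canonical commutation
relation `[A, B] = (i hbar) • id`, then for every unit vector `Ψ`,
`Δ_Ψ A · Δ_Ψ B ≥ hbar / 2`. -/
theorem kennard_inequality
    {E : Type*} [NormedAddCommGroup E] [InnerProductSpace ℂ E]
    (hbar : ℝ) (hhbar : 0 < hbar)
    (A B : E →ₗ[ℂ] E) (hA : A.IsSymmetric) (hB : B.IsSymmetric)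
    (hcomm : A ∘ₗ B - B ∘ₗ A = (Complex.I * (hbar : ℂ)) • (LinearMap.id : E →ₗ[ℂ] E))
    (Ψ : E) (hΨ : ‖Ψ‖ = 1) :
    hbar / 2 ≤ stddev A Ψ * stddev B Ψ := by
  set a : ℝ := Complex.re ⟪Ψ, A Ψ⟫ with ha
  set b : ℝ := Complex.re ⟪Ψ, B Ψ⟫ with hb
  set x : E := A Ψ - (a : ℂ) • Ψ with hx
  set y : E := B Ψ - (b : ℂ) • Ψ with hy
  have hΨ2 : ⟪Ψ, Ψ⟫ = 1 := by
    rw [@inner_self_eq_norm_sq_to_K ℂ, hΨ]; norm_num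
  have hcΨ : A (B Ψ) - B (A Ψ) = (Complex.I * (hbar : ℂ)) • Ψ := by
    have := congrArg (fun T : E →ₗ[ℂ] E => T Ψ) hcomm
    simpa using this
  have e1 : ⟪x, y⟫ - ⟪y, x⟫ = ⟪Ψ, A (B Ψ)⟫ - ⟪Ψ, B (A Ψ)⟫ := by
    simp only [hx, hy, inner_sub_left, inner_sub_right, inner_smul_left, inner_smul_right,
      Complex.conj_ofReal, hΨ2]
    linear_combination hA Ψ (B Ψ) - hB Ψ (A Ψ) - (b : ℂ) * hA Ψ Ψ + (a : ℂ) * hB Ψ Ψ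
  have e2 : ⟪Ψ, A (B Ψ)⟫ - ⟪Ψ, B (A Ψ)⟫ = Complex.I * (hbar : ℂ) := by
    rw [← inner_sub_right, hcΨ, inner_smul_right, hΨ2, mul_one]
  have key : ⟪x, y⟫ - ⟪y, x⟫ = Complex.I * (hbar : ℂ) := e1.trans e2
  have hconj : ⟪y, x⟫ = (starRingEnd ℂ) ⟪x, y⟫ := (inner_conj_symm y x).symm
  have him : 2 * (⟪x, y⟫).im = hbar := by
    have h := congrArg Complex.im key
    rw [hconj] at h
    simp only [Complex.sub_im, Complex.conj_im, Complex.mul_im, Complex.I_re, Complex.I_im,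
      Complex.ofReal_re, Complex.ofReal_im] at h
    linarith
  have step1 : hbar / 2 ≤ ‖⟪x, y⟫‖ :=
    le_trans (by linarith [le_abs_self (⟪x, y⟫).im, abs_le.mp (Complex.abs_im_le_norm ⟪x, y⟫)])
      (le_refl _)
  have step2 : ‖⟪x, y⟫‖ ≤ ‖x‖ * ‖y‖ := by
    simpa using norm_inner_le_norm (𝕜 := ℂ) x y
  have hsA : stddev A Ψ = ‖x‖ := stddev_eq_norm_centered A hA Ψ hΨ
  have hsB : stddev B Ψ = ‖y‖ := stddev_eq_norm_centered B hB Ψ hΨ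
  rw [hsA, hsB]
  linarith
end

section
/- In the Arthurs–Kelly algebra, the error and disturbance operators satisfy: [ε_Xi, ε_Pi] = −(i ħ) • id, [ε_Xi, δ_P] = −(i ħ) • id, [δ_X, ε_Pi] = −(i ħ) • id, [ε_Xf, ε_Pf] = (i ħ) • id, [ε_Xf, δ_P] = −(i ħ) • id, [δ_X, ε_Pf] = −(i ħ) • id, and all other commutators among the six operators ε_Xi, ε_Pi, ε_Xf, ε_Pf, δ_X, δ_P vanish (in particular [ε_Xi, ε_Xf] = [ε_Pi, ε_Pf] = [ε_Xi, δ_X] = [ε_Pi, δ_P] = [ε_Xf, δ_X] = [ε_Pf, δ_P] = [δ_X, δ_P] = 0). -/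
noncomputable section

variable {E : Type*} [NormedAddCommGroup E] [InnerProductSpace ℂ E]

/-- The commOp of two operators. -/
def commOp (A B : E →ₗ[ℂ] E) : E →ₗ[ℂ] E := A ∘ₗ B - B ∘ₗ A

/-- Final Heisenberg-picture position: `x_f = x + πP`. -/
def xf (x piP : E →ₗ[ℂ] E) : E →ₗ[ℂ] E := x + piP

/-- Final Heisenberg-picture momentum: `p_f = p − πX`. -/
def pf (p piX : E →ₗ[ℂ] E) : E →ₗ[ℂ] E := p - piX

/-- Final X-pointer observable: `μXf = μX + x + (1/2) • πP`. -/
def muXf (muX x piP : E →ₗ[ℂ] E) : E →ₗ[ℂ] E := muX + x + (1 / 2 : ℂ) • piP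

/-- Final P-pointer observable: `μPf = μP + p − (1/2) • πX`. -/
def muPf (muP p piX : E →ₗ[ℂ] E) : E →ₗ[ℂ] E := muP + p - (1 / 2 : ℂ) • piX

/-- Retrodictive X error operator: `ε_Xi = μXf − x`. -/
def epsXi (muX x piP : E →ₗ[ℂ] E) : E →ₗ[ℂ] E := muXf muX x piP - x

/-- Retrodictive P error operator: `ε_Pi = μPf − p`. -/
def epsPi (muP p piX : E →ₗ[ℂ] E) : E →ₗ[ℂ] E := muPf muP p piX - p

/-- Predictive X error operator: `ε_Xf = μXf − x_f`. -/
def epsXf (muX x piP : E →ₗ[ℂ] E) : E →ₗ[ℂ] E := muXf muX x piP - xf x piP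

/-- Predictive P error operator: `ε_Pf = μPf − p_f`. -/
def epsPf (muP p piX : E →ₗ[ℂ] E) : E →ₗ[ℂ] E := muPf muP p piX - pf p piX

/-- X disturbance operator: `δ_X = x_f − x`. -/
def deltaX (x piP : E →ₗ[ℂ] E) : E →ₗ[ℂ] E := xf x piP - x

/-- P disturbance operator: `δ_P = p_f − p`. -/
def deltaP (p piX : E →ₗ[ℂ] E) : E →ₗ[ℂ] E := pf p piX - p

lemma commOp_add_left (A B C : E →ₗ[ℂ] E) :
    commOp (A + B) C = commOp A C + commOp B C := by
  simp only [commOp, LinearMap.add_comp, LinearMap.comp_add]; abel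

lemma commOp_add_right (A B C : E →ₗ[ℂ] E) :
    commOp A (B + C) = commOp A B + commOp A C := by
  simp only [commOp, LinearMap.add_comp, LinearMap.comp_add]; abel

lemma commOp_sub_left (A B C : E →ₗ[ℂ] E) :
    commOp (A - B) C = commOp A C - commOp B C := by
  simp only [commOp, LinearMap.sub_comp, LinearMap.comp_sub]; abel

lemma commOp_sub_right (A B C : E →ₗ[ℂ] E) :
    commOp A (B - C) = commOp A B - commOp A C := by
  simp only [commOp, LinearMap.sub_comp, LinearMap.comp_sub]; abel

lemma commOp_smul_left (c : ℂ) (A B : E →ₗ[ℂ] E) :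
    commOp (c • A) B = c • commOp A B := by
  simp only [commOp, LinearMap.smul_comp, LinearMap.comp_smul, smul_sub]

lemma commOp_smul_right (c : ℂ) (A B : E →ₗ[ℂ] E) :
    commOp A (c • B) = c • commOp A B := by
  simp only [commOp, LinearMap.smul_comp, LinearMap.comp_smul, smul_sub]

lemma commOp_swap (A B : E →ₗ[ℂ] E) : commOp B A = - commOp A B := by
  simp only [commOp]; abel

lemma commOp_self (A : E →ₗ[ℂ] E) : commOp A A = 0 := by
  simp [commOp]

lemma epsXi_eq (muX x piP : E →ₗ[ℂ] E) :
    epsXi muX x piP = muX + (1 / 2 : ℂ) • piP := by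
  simp only [epsXi, muXf]; abel

lemma epsPi_eq (muP p piX : E →ₗ[ℂ] E) :
    epsPi muP p piX = muP - (1 / 2 : ℂ) • piX := by
  simp only [epsPi, muPf]; abel

lemma epsXf_eq (muX x piP : E →ₗ[ℂ] E) :
    epsXf muX x piP = muX - (1 / 2 : ℂ) • piP := by
  simp only [epsXf, muXf, xf]; module

lemma epsPf_eq (muP p piX : E →ₗ[ℂ] E) :
    epsPf muP p piX = muP + (1 / 2 : ℂ) • piX := by
  simp only [epsPf, muPf, pf]; module

lemma deltaX_eq (x piP : E →ₗ[ℂ] E) : deltaX x piP = piP := by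
  simp only [deltaX, xf]; abel

lemma deltaP_eq (p piX : E →ₗ[ℂ] E) : deltaP p piX = (-1 : ℂ) • piX := by
  simp only [deltaP, pf, neg_one_smul]; abel

/-- Commutation relations of the Arthurs–Kelly error and disturbance operators. -/
theorem arthurs_kelly_error_disturbance_commOps
    (hbar : ℝ) (hhbar : 0 < hbar)
    (x p muX piX muP piP : E →ₗ[ℂ] E)
    (hx : x.IsSymmetric) (hp : p.IsSymmetric)
    (hmuX : muX.IsSymmetric) (hpiX : piX.IsSymmetric)
    (hmuP : muP.IsSymmetric) (hpiP : piP.IsSymmetric)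
    (hxp : commOp x p = (Complex.I * (hbar : ℂ)) • (LinearMap.id : E →ₗ[ℂ] E))
    (hmuXpiX : commOp muX piX = (Complex.I * (hbar : ℂ)) • (LinearMap.id : E →ₗ[ℂ] E))
    (hmuPpiP : commOp muP piP = (Complex.I * (hbar : ℂ)) • (LinearMap.id : E →ₗ[ℂ] E))
    (hxmuX : commOp x muX = 0) (hxpiX : commOp x piX = 0)
    (hxmuP : commOp x muP = 0) (hxpiP : commOp x piP = 0)
    (hpmuX : commOp p muX = 0) (hppiX : commOp p piX = 0)
    (hpmuP : commOp p muP = 0) (hppiP : commOp p piP = 0)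
    (hmuXmuP : commOp muX muP = 0) (hmuXpiP : commOp muX piP = 0)
    (hpiXmuP : commOp piX muP = 0) (hpiXpiP : commOp piX piP = 0) :
    commOp (epsXi muX x piP) (epsPi muP p piX)
        = (-(Complex.I * (hbar : ℂ))) • (LinearMap.id : E →ₗ[ℂ] E) ∧
    commOp (epsXi muX x piP) (deltaP p piX)
        = (-(Complex.I * (hbar : ℂ))) • (LinearMap.id : E →ₗ[ℂ] E) ∧
    commOp (deltaX x piP) (epsPi muP p piX)
        = (-(Complex.I * (hbar : ℂ))) • (LinearMap.id : E →ₗ[ℂ] E) ∧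
    commOp (epsXf muX x piP) (epsPf muP p piX)
        = (Complex.I * (hbar : ℂ)) • (LinearMap.id : E →ₗ[ℂ] E) ∧
    commOp (epsXf muX x piP) (deltaP p piX)
        = (-(Complex.I * (hbar : ℂ))) • (LinearMap.id : E →ₗ[ℂ] E) ∧
    commOp (deltaX x piP) (epsPf muP p piX)
        = (-(Complex.I * (hbar : ℂ))) • (LinearMap.id : E →ₗ[ℂ] E) ∧
    commOp (epsXi muX x piP) (epsXf muX x piP) = 0 ∧
    commOp (epsXi muX x piP) (epsPf muP p piX) = 0 ∧
    commOp (epsPi muP p piX) (epsXf muX x piP) = 0 ∧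
    commOp (epsPi muP p piX) (epsPf muP p piX) = 0 ∧
    commOp (epsXi muX x piP) (deltaX x piP) = 0 ∧
    commOp (epsPi muP p piX) (deltaP p piX) = 0 ∧
    commOp (epsXf muX x piP) (deltaX x piP) = 0 ∧
    commOp (epsPf muP p piX) (deltaP p piX) = 0 ∧
    commOp (deltaX x piP) (deltaP p piX) = 0 := by
  have s1 : commOp piX muX = -((Complex.I * (hbar : ℂ)) • (LinearMap.id : E →ₗ[ℂ] E)) := by
    rw [commOp_swap, hmuXpiX]
  have s2 : commOp piP muP = -((Complex.I * (hbar : ℂ)) • (LinearMap.id : E →ₗ[ℂ] E)) := by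
    rw [commOp_swap, hmuPpiP]
  have z1 : commOp muP muX = 0 := by rw [commOp_swap, hmuXmuP, neg_zero]
  have z2 : commOp piP muX = 0 := by rw [commOp_swap, hmuXpiP, neg_zero]
  have z3 : commOp muP piX = 0 := by rw [commOp_swap, hpiXmuP, neg_zero]
  have z4 : commOp piP piX = 0 := by rw [commOp_swap, hpiXpiP, neg_zero]
  refine ⟨?_, ?_, ?_, ?_, ?_, ?_, ?_, ?_, ?_, ?_, ?_, ?_, ?_, ?_, ?_⟩ <;>
  · simp only [epsXi_eq, epsPi_eq, epsXf_eq, epsPf_eq, deltaX_eq, deltaP_eq,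
      commOp_add_left, commOp_add_right, commOp_sub_left, commOp_sub_right,
      commOp_smul_left, commOp_smul_right, commOp_self,
      hmuXpiX, hmuPpiP, hmuXmuP, hmuXpiP, hpiXmuP, hpiXpiP, s1, s2, z1, z2, z3, z4,
      smul_zero, add_zero, zero_add, sub_zero, zero_sub, smul_neg, neg_neg, smul_smul]
    try module

end
end
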